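/- arXiv:1010.1394 — 2 statements merged into one kernel-verified Lean document; each statement's English description precedes it below -/
import Mathlib

section
/- Let d, k ≥ 1 be integers. Then there exists ε₀ > 0 (depending on d and k) such that for all ε ∈ [0, ε₀], t_{d,k}(ε) > (2/(5·log 2))·2^{-kd}. In particular t_{d,k}(0) = d − s₀ > (2/(5·log 2))·2^{-kd}, where s₀ is the largest real solution of (2^d−1)·Σ_{i=1}^k 2^{-s·i} = 1. -/
/-!
Put `x = 2^{-d}` and `y = x^k = 2^{-kd}`. At `s = d - δ` with `δ = (2/(5 log 2))·y`, the `i`-th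
term of `(2^d - 1)·Σ 2^{-s(i+1)}` is `x^{i+1}·exp(2y(i+1)/5) ≤ x^{i+1}(1 + y(i+1)/2)`, because
`2y(i+1)/5 ≤ 2ky/5 ≤ 1/5`. Summing the geometric series and its derivative gives a total
`< (1 - y) + (y/2)·2 = 1`. As the sum decreases in `s`, every solution at `ε = 0` lies strictly
below some `s' < d - δ`. For `ε < 1` the defining function of `s_{d,k}(ε)` is antitone in `s` and,
since `ε log(1/ε) → 0`, continuous in `ε` at `0`; so it stays negative at `s'` for small `ε`.
-/

open MeasureTheory Filter Metric Set
open scoped ENNReal NNReal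

/-- `s_{d,k}(ε)`: the largest real solution `s` of
`(1−ε)·log((2^d−1)·(Σ_{i=1}^k 2^{-s·i})/(1−ε)) + ε·log(1/ε) = s·ε·log(2^k)`
(with the convention `0·log 0 = 0`). -/
noncomputable def sdk (d k : ℕ) (ε : ℝ) : ℝ :=
  sSup {s : ℝ |
    (1 - ε) * Real.log (((2 : ℝ) ^ d - 1) *
        (∑ i ∈ Finset.range k, (2 : ℝ) ^ (-(s * ((i : ℝ) + 1)))) / (1 - ε))
      + ε * Real.log (1 / ε) = s * ε * Real.log ((2 : ℝ) ^ k)}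

/-- `t_{d,k}(ε) = d − s_{d,k}(ε)`. -/
noncomputable def tdk (d k : ℕ) (ε : ℝ) : ℝ := d - sdk d k ε

open Real Topology

noncomputable def moranSum (d k : ℕ) (s : ℝ) : ℝ :=
  ((2 : ℝ) ^ d - 1) * ∑ i ∈ Finset.range k, (2 : ℝ) ^ (-(s * ((i : ℝ) + 1)))

noncomputable def sdkDefect (d k : ℕ) (ε s : ℝ) : ℝ :=
  (1 - ε) * log (moranSum d k s / (1 - ε)) + ε * log (1 / ε) - s * ε * log ((2 : ℝ) ^ k)

section moranSum

variable {d k : ℕ}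

lemma one_le_two_pow_sub_one (hd : 1 ≤ d) : (1 : ℝ) ≤ 2 ^ d - 1 := by
  have : (2 : ℝ) ≤ 2 ^ d := by simpa using pow_le_pow_right₀ one_le_two hd
  linarith

lemma moranSum_pos (hd : 1 ≤ d) (hk : 1 ≤ k) (s : ℝ) : 0 < moranSum d k s :=
  mul_pos (by linarith [one_le_two_pow_sub_one hd])
    (Finset.sum_pos (fun _ _ => by positivity) (Finset.nonempty_range_iff.2 (by omega)))

lemma moranSum_antitone (d k : ℕ) : Antitone (moranSum d k) := by
  intro s t hst
  refine mul_le_mul_of_nonneg_left (Finset.sum_le_sum fun i _ => ?_) ?_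
  · exact rpow_le_rpow_of_exponent_le one_le_two (by nlinarith [i.cast_nonneg (α := ℝ)])
  · linarith [one_le_pow₀ (M₀ := ℝ) one_le_two (n := d)]

lemma continuous_moranSum (d k : ℕ) : Continuous (moranSum d k) := by
  unfold moranSum
  fun_prop (disch := norm_num)

lemma one_le_moranSum_zero (hd : 1 ≤ d) (hk : 1 ≤ k) : 1 ≤ moranSum d k 0 := by
  simp only [moranSum, zero_mul, neg_zero, rpow_zero, Finset.sum_const, Finset.card_range,
    nsmul_eq_mul, mul_one]
  nlinarith [one_le_two_pow_sub_one hd, (Nat.one_le_cast (α := ℝ)).2 hk]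

lemma pos_of_moranSum_lt_one (hd : 1 ≤ d) (hk : 1 ≤ k) {s : ℝ} (hs : moranSum d k s < 1) :
    0 < s := by
  by_contra! h
  linarith [moranSum_antitone d k h, one_le_moranSum_zero hd hk]

end moranSum

section GeomSum

variable {R : Type*} [CommRing R]

lemma one_sub_mul_sum_pow_succ (x : R) (k : ℕ) :
    (1 - x) * ∑ i ∈ Finset.range k, x ^ (i + 1) = x * (1 - x ^ k) := by
  simp_rw [pow_succ', ← Finset.mul_sum]
  rw [mul_left_comm, mul_neg_geom_sum]

lemma one_sub_sq_mul_sum_succ_mul_pow_succ (x : R) (k : ℕ) :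
    (1 - x) ^ 2 * ∑ i ∈ Finset.range k, ((i : R) + 1) * x ^ (i + 1) =
      x * (1 - x ^ k - k * x ^ k * (1 - x)) := by
  induction k with
  | zero => simp
  | succ n ih =>
    rw [Finset.sum_range_succ]
    push_cast
    linear_combination ih

end GeomSum

lemma one_sub_mul_sum_succ_mul_pow_succ_lt {x : ℝ} (hx0 : 0 < x) (hx1 : x < 1) (k : ℕ) :
    (1 - x) * ∑ i ∈ Finset.range k, ((i : ℝ) + 1) * x ^ (i + 1) < x / (1 - x) := by
  have hx : 0 < 1 - x := by linarith
  rw [lt_div_iff₀ hx, mul_right_comm, ← sq, one_sub_sq_mul_sum_succ_mul_pow_succ]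
  have : 0 < x ^ k := pow_pos hx0 k
  have : 0 ≤ (k : ℝ) * x ^ k * (1 - x) := by positivity
  nlinarith

lemma exp_le_one_add_five_div_four_mul {z : ℝ} (h0 : 0 ≤ z) (h1 : z ≤ 1 / 5) :
    exp z ≤ 1 + 5 / 4 * z := by
  refine (exp_bound_div_one_sub_of_interval h0 (by linarith)).trans ?_
  rw [div_le_iff₀ (by linarith)]
  nlinarith

lemma two_mul_le_two_pow {k : ℕ} (hk : 1 ≤ k) : 2 * k ≤ 2 ^ k := by
  induction k, hk using Nat.le_induction with
  | base => norm_num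
  | succ n hn ih => rw [pow_succ]; omega

lemma two_rpow_neg_sub_mul (d i : ℕ) (δ : ℝ) :
    (2 : ℝ) ^ (-((d - δ) * ((i : ℝ) + 1))) =
      ((2 : ℝ) ^ d)⁻¹ ^ (i + 1) * exp (log 2 * δ * (i + 1)) := by
  have hcast : (d : ℝ) * ((i : ℝ) + 1) = ((d * (i + 1) : ℕ) : ℝ) := by push_cast; ring
  rw [show -((d - δ) * ((i : ℝ) + 1)) = -((d : ℝ) * (i + 1)) + δ * (i + 1) by ring,
    rpow_add two_pos, rpow_neg zero_le_two, hcast, rpow_natCast, pow_mul, inv_pow,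
    rpow_def_of_pos two_pos, mul_assoc]

lemma natCast_mul_pow_le_half {x : ℝ} (hx0 : 0 ≤ x) (hx1 : x ≤ 1 / 2) {k : ℕ} (hk : 1 ≤ k) :
    k * x ^ k ≤ 1 / 2 := by
  have h2k : (2 * k : ℝ) ≤ 2 ^ k := by exact_mod_cast two_mul_le_two_pow hk
  calc k * x ^ k ≤ k * (1 / 2) ^ k := by gcongr
    _ ≤ 1 / 2 := by
      rw [one_div, inv_pow, ← div_eq_mul_inv, div_le_iff₀ (by positivity)]
      linarith

lemma two_rpow_neg_sub_mul_le (d i : ℕ) {y : ℝ} (hy : 0 ≤ y) (hiy : ((i : ℝ) + 1) * y ≤ 1 / 2) :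
    (2 : ℝ) ^ (-((d - 2 / (5 * log 2) * y) * ((i : ℝ) + 1))) ≤
      ((2 : ℝ) ^ d)⁻¹ ^ (i + 1) + y / 2 * ((i + 1) * ((2 : ℝ) ^ d)⁻¹ ^ (i + 1)) := by
  have hlog : log 2 * (2 / (5 * log 2) * y) = 2 / 5 * y := by
    field_simp [(log_pos one_lt_two).ne']
  rw [two_rpow_neg_sub_mul, hlog]
  calc ((2 : ℝ) ^ d)⁻¹ ^ (i + 1) * exp (2 / 5 * y * (i + 1))
      ≤ ((2 : ℝ) ^ d)⁻¹ ^ (i + 1) * (1 + 5 / 4 * (2 / 5 * y * (i + 1))) := by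
        gcongr
        exact exp_le_one_add_five_div_four_mul (by positivity) (by nlinarith)
    _ = _ := by ring

lemma moranSum_sub_lt_one {d k : ℕ} (hd : 1 ≤ d) (hk : 1 ≤ k) :
    moranSum d k (d - 2 / (5 * log 2) * ((2 : ℝ) ^ (k * d))⁻¹) < 1 := by
  set x : ℝ := ((2 : ℝ) ^ d)⁻¹ with hx
  have hx0 : 0 < x := by positivity
  have hx1 : x ≤ 1 / 2 := by
    rw [hx, one_div]
    exact inv_anti₀ two_pos (by simpa using pow_le_pow_right₀ one_le_two hd)
  have hcoef : (2 : ℝ) ^ d - 1 = (1 - x) / x := by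
    rw [hx]
    field_simp
  rw [pow_mul', ← inv_pow, ← hx]
  set y := x ^ k
  have hterm : ∀ i ∈ Finset.range k, (2 : ℝ) ^ (-((d - 2 / (5 * log 2) * y) * ((i : ℝ) + 1))) ≤
      x ^ (i + 1) + y / 2 * ((i + 1) * x ^ (i + 1)) := fun i hi => by
    have hik : (i : ℝ) + 1 ≤ k := by exact_mod_cast Finset.mem_range.1 hi
    have hky := natCast_mul_pow_le_half hx0.le hx1 hk
    exact two_rpow_neg_sub_mul_le d i (by positivity) (by nlinarith [pow_pos hx0 k])
  have hS1 := one_sub_mul_sum_pow_succ x k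
  have hS2 := one_sub_mul_sum_succ_mul_pow_succ_lt hx0 (by linarith) k
  calc moranSum d k (d - 2 / (5 * log 2) * y)
      ≤ (1 - x) / x * ∑ i ∈ Finset.range k, (x ^ (i + 1) + y / 2 * ((i + 1) * x ^ (i + 1))) := by
        rw [moranSum, hcoef]
        exact mul_le_mul_of_nonneg_left (Finset.sum_le_sum hterm) (div_nonneg (by linarith) hx0.le)
    _ = (1 - y) + y / 2 * (((1 - x) * ∑ i ∈ Finset.range k, ((i : ℝ) + 1) * x ^ (i + 1)) / x) := by
        rw [Finset.sum_add_distrib, ← Finset.mul_sum, mul_add, div_mul_eq_mul_div, hS1]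
        field_simp
        ring
    _ < (1 - y) + y / 2 * ((x / (1 - x)) / x) := by gcongr
    _ ≤ 1 := by
        rw [div_div_cancel_left' hx0.ne']
        have : (1 - x)⁻¹ ≤ 2 := by rw [inv_le_comm₀ (by linarith) two_pos]; linarith
        nlinarith [pow_pos hx0 k]

section sdkDefect

variable {d k : ℕ}

lemma sdk_eq_sSup_sdkDefect (d k : ℕ) (ε : ℝ) :
    sdk d k ε = sSup {s | sdkDefect d k ε s = 0} := by
  simp only [sdkDefect, sub_eq_zero]
  rfl

lemma sdkDefect_zero (d k : ℕ) (s : ℝ) : sdkDefect d k 0 s = log (moranSum d k s) := by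
  simp [sdkDefect]

lemma sdk_zero (hd : 1 ≤ d) (hk : 1 ≤ k) : sdk d k 0 = sSup {s | moranSum d k s = 1} := by
  rw [sdk_eq_sSup_sdkDefect]
  congr 1
  ext s
  change sdkDefect d k 0 s = 0 ↔ moranSum d k s = 1
  rw [sdkDefect_zero]
  exact ⟨fun h => by rw [← exp_log (moranSum_pos hd hk s), h, exp_zero],
    fun h => by rw [h, log_one]⟩

lemma sdkDefect_antitone (hd : 1 ≤ d) (hk : 1 ≤ k) {ε : ℝ} (h0 : 0 ≤ ε) (h1 : ε < 1) :
    Antitone (sdkDefect d k ε) := by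
  intro s t hst
  have hlog : log (moranSum d k t / (1 - ε)) ≤ log (moranSum d k s / (1 - ε)) :=
    log_le_log (div_pos (moranSum_pos hd hk t) (by linarith))
      (div_le_div_of_nonneg_right (moranSum_antitone d k hst) (by linarith))
  have hL : 0 ≤ log ((2 : ℝ) ^ k) := log_nonneg (one_le_pow₀ one_le_two)
  unfold sdkDefect
  linarith [mul_le_mul_of_nonneg_left hlog (by linarith : 0 ≤ 1 - ε),
    mul_le_mul_of_nonneg_right (mul_le_mul_of_nonneg_right hst h0) hL]

lemma sdk_le_of_sdkDefect_neg (hd : 1 ≤ d) (hk : 1 ≤ k) {ε s : ℝ} (h0 : 0 ≤ ε) (h1 : ε < 1)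
    (hs0 : 0 ≤ s) (hs : sdkDefect d k ε s < 0) : sdk d k ε ≤ s := by
  rw [sdk_eq_sSup_sdkDefect]
  -- `0 ≤ s` covers the empty set, whose `sSup` is `0`.
  refine Real.sSup_le (fun t ht => ?_) hs0
  by_contra! hst
  exact hs.not_ge (ht ▸ sdkDefect_antitone hd hk h0 h1 hst.le)

lemma continuousAt_sdkDefect_zero (hd : 1 ≤ d) (hk : 1 ≤ k) (s : ℝ) :
    ContinuousAt (fun ε => sdkDefect d k ε s) 0 := by
  simp only [sdkDefect, one_div, log_inv, mul_neg]
  have := continuous_mul_log.continuousAt (x := 0)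
  have hpos := moranSum_pos hd hk s
  fun_prop (disch := simp [hpos.ne'])

lemma exists_forall_Icc_sdk_le (hd : 1 ≤ d) (hk : 1 ≤ k) {s : ℝ} (hs : moranSum d k s < 1) :
    ∃ ε₀ > 0, ∀ ε ∈ Icc 0 ε₀, sdk d k ε ≤ s := by
  have hneg : sdkDefect d k 0 s < 0 := by
    rw [sdkDefect_zero]
    exact log_neg (moranSum_pos hd hk s) hs
  have hev : ∀ᶠ ε in 𝓝[≥] 0, sdkDefect d k ε s < 0 ∧ ε < 1 := nhdsWithin_le_nhds <|
    ((continuousAt_sdkDefect_zero hd hk s).eventually_lt_const hneg).and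
      (eventually_lt_nhds one_pos)
  obtain ⟨ε₀, hε₀, hsub⟩ := mem_nhdsGE_iff_exists_Icc_subset.1 hev
  exact ⟨ε₀, hε₀, fun ε hε => sdk_le_of_sdkDefect_neg hd hk hε.1 (hsub hε).2
    (pos_of_moranSum_lt_one hd hk hs).le (hsub hε).1⟩

end sdkDefect

/-- For integers `d, k ≥ 1` there is `ε₀ > 0` such that
`t_{d,k}(ε) > (2/(5·log 2))·2^{-kd}` for all `ε ∈ [0, ε₀]`. In particular
`t_{d,k}(0) = d − s₀ > (2/(5·log 2))·2^{-kd}`, where `s₀` is the largest real solution of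
`(2^d−1)·Σ_{i=1}^k 2^{-s·i} = 1`. -/
theorem tdk_lower_bound_near_zero (d k : ℕ) (hd : 1 ≤ d) (hk : 1 ≤ k) :
    (∃ ε₀ > (0 : ℝ), ∀ ε ∈ Set.Icc (0 : ℝ) ε₀,
        2 / (5 * Real.log 2) * ((2 : ℝ) ^ (k * d))⁻¹ < tdk d k ε) ∧
      tdk d k 0 = (d : ℝ) -
        sSup {s : ℝ |
          ((2 : ℝ) ^ d - 1) * (∑ i ∈ Finset.range k, (2 : ℝ) ^ (-(s * ((i : ℝ) + 1)))) = 1} ∧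
      2 / (5 * Real.log 2) * ((2 : ℝ) ^ (k * d))⁻¹ < tdk d k 0 := by
  set δ := 2 / (5 * log 2) * ((2 : ℝ) ^ (k * d))⁻¹
  obtain ⟨s, hsδ, hs⟩ : ∃ s < d - δ, moranSum d k s < 1 :=
    ((continuous_moranSum d k).continuousAt.eventually_lt_const
      (moranSum_sub_lt_one hd hk)).exists_lt
  obtain ⟨ε₀, hε₀, hle⟩ := exists_forall_Icc_sdk_le hd hk hs
  have hlt : ∀ ε ∈ Icc 0 ε₀, δ < tdk d k ε := fun ε hε => by
    rw [tdk]
    linarith [hle ε hε]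
  exact ⟨⟨ε₀, hε₀, hlt⟩, by rw [tdk, sdk_zero hd hk]; rfl, hlt 0 ⟨le_rfl, hε₀.le⟩⟩
end

section
/- Let δ > 0, let R* be a δ-regular tree of cubes with root [0,1)^d, and let μ be a Borel probability measure on [0,1)^d. Then for μ-almost every x, lim_{n→∞} (1/n)·( log(1/μ(R_n(x))) − Σ_{i=0}^{n-1} H(R_i(x)) ) = 0. -/
open MeasureTheory Filter Metric Set
open scoped ENNReal NNReal

/-- The unit cube `[0,1)^d`. -/
def unitCube (d : ℕ) : Set (EuclideanSpace ℝ (Fin d)) :=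
  {x | ∀ j : Fin d, 0 ≤ x j ∧ x j < 1}

/-- The half-open axis-parallel cube with corner `a` and side `l`. -/
def cubeSet {d : ℕ} (a : EuclideanSpace ℝ (Fin d)) (l : ℝ) : Set (EuclideanSpace ℝ (Fin d)) :=
  {y | ∀ j : Fin d, a j ≤ y j ∧ y j < a j + l}

/-- A `δ`-regular tree of half-open cubes with root `[0,1)^d`, encoded by the functions
`x ↦ R_n(x)` (given by a corner and a side length). At each level the cubes containing
points of the unit cube form a partition of their parent into finitely many cubes,
and all side ratios lie in `[δ, 1−δ]`. -/
structure CubeTree (d : ℕ) (δ : ℝ) where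
  corner : ℕ → EuclideanSpace ℝ (Fin d) → EuclideanSpace ℝ (Fin d)
  side : ℕ → EuclideanSpace ℝ (Fin d) → ℝ
  corner_zero : ∀ x ∈ unitCube d, corner 0 x = 0
  side_zero : ∀ x ∈ unitCube d, side 0 x = 1
  mem_node : ∀ n, ∀ x ∈ unitCube d, x ∈ cubeSet (corner n x) (side n x)
  side_pos : ∀ n, ∀ x ∈ unitCube d, 0 < side n x
  compat : ∀ n, ∀ x ∈ unitCube d, ∀ y ∈ unitCube d,
    y ∈ cubeSet (corner n x) (side n x) → corner n y = corner n x ∧ side n y = side n x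
  nested : ∀ n, ∀ x ∈ unitCube d,
    cubeSet (corner (n + 1) x) (side (n + 1) x) ⊆ cubeSet (corner n x) (side n x)
  regular : ∀ n, ∀ x ∈ unitCube d,
    δ ≤ side (n + 1) x / side n x ∧ side (n + 1) x / side n x ≤ 1 - δ
  finiteChildren : ∀ n, ∀ x ∈ unitCube d,
    Set.Finite {c : EuclideanSpace ℝ (Fin d) × ℝ |
      ∃ y ∈ unitCube d, y ∈ cubeSet (corner n x) (side n x) ∧
        c = (corner (n + 1) y, side (n + 1) y)}

/-- The cube `R_n(x)` of the tree, as a set. -/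
def CubeTree.node {d : ℕ} {δ : ℝ} (T : CubeTree d δ) (n : ℕ)
    (x : EuclideanSpace ℝ (Fin d)) : Set (EuclideanSpace ℝ (Fin d)) :=
  cubeSet (T.corner n x) (T.side n x)

/-- The offspring of the cube `R_n(x)`, as (corner, side) pairs. -/
def CubeTree.children {d : ℕ} {δ : ℝ} (T : CubeTree d δ) (n : ℕ)
    (x : EuclideanSpace ℝ (Fin d)) : Set (EuclideanSpace ℝ (Fin d) × ℝ) :=
  {c | ∃ y ∈ unitCube d, y ∈ T.node n x ∧ c = (T.corner (n + 1) y, T.side (n + 1) y)}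

/-- The entropy `H(R_n(x)) = Σ_{R ∈ R(Q)} μ^Q(R)·log(1/μ^Q(R))` where `μ^Q(R) = μ(R)/μ(Q)`. -/
noncomputable def treeEntropy {d : ℕ} {δ : ℝ} (μ : Measure (EuclideanSpace ℝ (Fin d)))
    (T : CubeTree d δ) (n : ℕ) (x : EuclideanSpace ℝ (Fin d)) : ℝ :=
  ∑ᶠ c ∈ T.children n x,
    Real.negMulLog ((μ (cubeSet c.1 c.2)).toReal / (μ (T.node n x)).toReal)

/-- The Lyapunov exponent `λ(R_n(x)) = Σ_{R ∈ R(Q)} μ^Q(R)·log(ℓ(Q)/ℓ(R))`. -/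
noncomputable def treeLyap {d : ℕ} {δ : ℝ} (μ : Measure (EuclideanSpace ℝ (Fin d)))
    (T : CubeTree d δ) (n : ℕ) (x : EuclideanSpace ℝ (Fin d)) : ℝ :=
  ∑ᶠ c ∈ T.children n x,
    ((μ (cubeSet c.1 c.2)).toReal / (μ (T.node n x)).toReal) * Real.log (T.side n x / c.2)

/-!
Write `D_n(x) = log (μ(R_n(x)) / μ(R_{n+1}(x))) - H(R_n(x))`, so that the quantity in the theorem
is `(1/n) ∑_{i<n} D_i(x)`. Given the level-`n` cube `Q` of `x`, `D_n` equals
`log (μ(Q)/μ(R)) - H(Q)` on each child `R` of `Q`, which has conditional probability `μ(R)/μ(Q)`;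
hence `D_n` has conditional mean zero. By `δ`-regularity a cube has at most `δ^{-d}` children,
which bounds the conditional moments of `D_n` uniformly. For a martingale difference sequence
with bounded conditional fourth moments, `E[S_n⁴] = O(n²)`, and Chebyshev's inequality together
with Borel–Cantelli gives `S_n / n → 0` almost surely.
-/

namespace Real

theorem mul_log_div_pow_le {p q : ℝ} (hp : 0 < p) (hpq : p ≤ q) (k : ℕ) :
    p * log (q / p) ^ k ≤ k ^ k * q := by
  rcases k.eq_zero_or_pos with rfl | hk
  · simpa using hpq
  have ht : 1 ≤ q / p := (one_le_div hp).mpr hpq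
  have hk' : (0 : ℝ) < k := by exact_mod_cast hk
  -- `log t ≤ k t^(1/k)`, raised to the `k`-th power
  have hlog : log (q / p) ^ k ≤ (k * (q / p) ^ (1 / (k : ℝ))) ^ k := by
    refine pow_le_pow_left₀ (log_nonneg ht) ?_ k
    simpa [div_div_eq_mul_div, one_div, mul_comm] using
      log_le_rpow_div (by positivity : 0 ≤ q / p) (one_div_pos.mpr hk')
  have hroot : ((q / p) ^ (1 / (k : ℝ))) ^ k = q / p := by
    rw [← rpow_natCast, ← rpow_mul (by positivity), one_div_mul_cancel hk'.ne', rpow_one]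
  calc p * log (q / p) ^ k ≤ p * (k * (q / p) ^ (1 / (k : ℝ))) ^ k :=
        mul_le_mul_of_nonneg_left hlog hp.le
    _ = k ^ k * q := by rw [mul_pow, hroot]; field_simp

end Real

theorem abs_sub_pow_le_pow_add_pow {a b : ℝ} (ha : 0 ≤ a) (hb : 0 ≤ b) (k : ℕ) :
    |a - b| ^ k ≤ a ^ k + b ^ k := by
  rcases le_total a b with h | h
  · calc |a - b| ^ k ≤ b ^ k :=
          pow_le_pow_left₀ (abs_nonneg _) (by rw [abs_sub_le_iff]; constructor <;> linarith) k
      _ ≤ a ^ k + b ^ k := le_add_of_nonneg_left (pow_nonneg ha k)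
  · calc |a - b| ^ k ≤ a ^ k :=
          pow_le_pow_left₀ (abs_nonneg _) (by rw [abs_sub_le_iff]; constructor <;> linarith) k
      _ ≤ a ^ k + b ^ k := le_add_of_nonneg_right (pow_nonneg hb k)

section FiniteDistribution

open Real Finset

variable {ι : Type*} {s : Finset ι} {p : ι → ℝ} {q H : ℝ}

theorem sum_information_sub_entropy_mul_eq_zero (hp : ∀ i ∈ s, 0 ≤ p i)
    (hq : ∑ i ∈ s, p i = q) (hH : ∑ i ∈ s, negMulLog (p i / q) = H) :
    ∑ i ∈ s, (log q - log (p i) - H) * p i = 0 := by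
  have hpq : ∀ i ∈ s, p i ≤ q := fun i hi => hq ▸ single_le_sum hp hi
  have hterm : ∀ i ∈ s, (log q - log (p i)) * p i = q * negMulLog (p i / q) := by
    intro i hi
    rcases (hp i hi).eq_or_lt with h | h
    · simp [← h]
    · have hq0 : 0 < q := h.trans_le (hpq i hi)
      rw [negMulLog, log_div h.ne' hq0.ne']
      field_simp
      ring
  calc ∑ i ∈ s, (log q - log (p i) - H) * p i
      = ∑ i ∈ s, (log q - log (p i)) * p i - H * ∑ i ∈ s, p i := by
        rw [mul_sum, ← sum_sub_distrib]
        exact sum_congr rfl fun i _ => by ring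
    _ = 0 := by rw [sum_congr rfl hterm, ← mul_sum, hH, hq]; ring

theorem sum_abs_information_sub_entropy_pow_mul_le (hp : ∀ i ∈ s, 0 ≤ p i)
    (hq : ∑ i ∈ s, p i = q) (hH : ∑ i ∈ s, negMulLog (p i / q) = H) (k : ℕ) :
    ∑ i ∈ s, |log q - log (p i) - H| ^ k * p i ≤ (#s * k ^ k + #s ^ k) * q := by
  have hpq : ∀ i ∈ s, p i ≤ q := fun i hi => hq ▸ single_le_sum hp hi
  have hq0 : 0 ≤ q := hq ▸ sum_nonneg hp
  have hratio : ∀ i ∈ s, 0 ≤ p i / q ∧ p i / q ≤ 1 := fun i hi =>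
    ⟨div_nonneg (hp i hi) hq0, div_le_one_of_le₀ (hpq i hi) hq0⟩
  have hH0 : 0 ≤ H := hH ▸ sum_nonneg fun i hi =>
    negMulLog_nonneg (hratio i hi).1 (hratio i hi).2
  have hHs : H ≤ #s := by
    rw [← hH, card_eq_sum_ones, Nat.cast_sum, Nat.cast_one]
    exact sum_le_sum fun i hi => (negMulLog_le_one_sub_self (hratio i hi).1).trans
      (by linarith [(hratio i hi).1])
  have hterm : ∀ i ∈ s, |log q - log (p i) - H| ^ k * p i ≤ k ^ k * q + H ^ k * p i := by
    intro i hi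
    rcases (hp i hi).eq_or_lt with h | h
    · rw [← h]; simp only [mul_zero, add_zero]; positivity
    · have hlog : log q - log (p i) = log (q / p i) :=
        (log_div (h.trans_le (hpq i hi)).ne' h.ne').symm
      rw [hlog]
      calc |log (q / p i) - H| ^ k * p i ≤ (log (q / p i) ^ k + H ^ k) * p i :=
            mul_le_mul_of_nonneg_right (abs_sub_pow_le_pow_add_pow
              (log_nonneg ((one_le_div h).mpr (hpq i hi))) hH0 k) h.le
        _ ≤ k ^ k * q + H ^ k * p i := by
            rw [add_mul, mul_comm]
            exact add_le_add_left (mul_log_div_pow_le h (hpq i hi) k) _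
  calc ∑ i ∈ s, |log q - log (p i) - H| ^ k * p i
      ≤ ∑ i ∈ s, (k ^ k * q + H ^ k * p i) := sum_le_sum hterm
    _ = #s * k ^ k * q + H ^ k * q := by
        rw [sum_add_distrib, ← mul_sum (a := H ^ k), hq, sum_const, nsmul_eq_mul]
        ring
    _ ≤ (#s * k ^ k + #s ^ k) * q := by
        rw [add_mul]
        gcongr

end FiniteDistribution

section BorelCantelli

open Topology

variable {Ω : Type*} [MeasurableSpace Ω] {μ : Measure Ω}

theorem measureReal_le_abs_le_integral_pow_four_div {f : Ω → ℝ}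
    (hf : Integrable (fun ω => f ω ^ 4) μ) {t : ℝ} (ht : 0 < t) :
    μ.real {ω | t ≤ |f ω|} ≤ (∫ ω, f ω ^ 4 ∂μ) / t ^ 4 := by
  have hset : {ω | t ≤ |f ω|} = {ω | t ^ 4 ≤ f ω ^ 4} := by
    ext ω
    rw [mem_ofPred_eq, mem_ofPred_eq, ← Even.pow_abs ⟨2, rfl⟩ (f ω),
      pow_le_pow_iff_left₀ ht.le (abs_nonneg _) (by norm_num)]
  rw [hset, le_div_iff₀ (by positivity), mul_comm]
  exact mul_meas_ge_le_integral_of_nonneg (ae_of_all μ fun ω => by positivity) hf _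

theorem ae_eventually_abs_lt_mul_of_integral_pow_four_le [IsFiniteMeasure μ] {S : ℕ → Ω → ℝ}
    {C : ℝ} (hint : ∀ n, Integrable (fun ω => S n ω ^ 4) μ)
    (hC : ∀ n, ∫ ω, S n ω ^ 4 ∂μ ≤ C * n ^ 2) {ε : ℝ} (hε : 0 < ε) :
    ∀ᵐ ω ∂μ, ∀ᶠ n : ℕ in atTop, |S (n + 1) ω| < ε * (n + 1 : ℕ) := by
  set s : ℕ → Set Ω := fun n => {ω | ε * (n + 1 : ℕ) ≤ |S (n + 1) ω|}
  have hbound : ∀ n : ℕ, μ.real (s n) ≤ C / ε ^ 4 * (1 / ((n + 1 : ℕ) : ℝ) ^ 2) := fun n => by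
    refine (measureReal_le_abs_le_integral_pow_four_div (hint _) (by positivity)).trans ?_
    rw [div_le_iff₀ (by positivity)]
    refine (hC (n + 1)).trans_eq ?_
    field_simp
  have hsum : Summable fun n => μ.real (s n) :=
    .of_nonneg_of_le (fun n => measureReal_nonneg) hbound
      (((summable_nat_add_iff 1).mpr (Real.summable_one_div_nat_pow.mpr one_lt_two)).mul_left _)
  have hfin : ∑' n, μ (s n) ≠ ⊤ := by
    rw [tsum_congr fun n => (ofReal_measureReal (s := s n)).symm,
      ← ENNReal.ofReal_tsum_of_nonneg (fun n => measureReal_nonneg) hsum]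
    exact ENNReal.ofReal_ne_top
  filter_upwards [ae_eventually_notMem hfin] with ω hω
  simpa only [s, mem_ofPred_eq, not_le] using hω

theorem ae_tendsto_div_atTop_of_integral_pow_four_le [IsFiniteMeasure μ] {S : ℕ → Ω → ℝ} {C : ℝ}
    (hint : ∀ n, Integrable (fun ω => S n ω ^ 4) μ) (hC : ∀ n, ∫ ω, S n ω ^ 4 ∂μ ≤ C * n ^ 2) :
    ∀ᵐ ω ∂μ, Tendsto (fun n : ℕ => S n ω / n) atTop (𝓝 0) := by
  have hall : ∀ᵐ ω ∂μ, ∀ k : ℕ, ∀ᶠ n : ℕ in atTop,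
      |S (n + 1) ω| < 1 / (k + 1 : ℝ) * (n + 1 : ℕ) :=
    ae_all_iff.mpr fun k =>
      ae_eventually_abs_lt_mul_of_integral_pow_four_le hint hC (by positivity)
  filter_upwards [hall] with ω hω
  rw [← tendsto_add_atTop_iff_nat 1, Metric.tendsto_atTop]
  intro ε hε
  obtain ⟨k, hk⟩ := exists_nat_one_div_lt hε
  obtain ⟨N, hN⟩ := eventually_atTop.mp (hω k)
  refine ⟨N, fun n hn => ?_⟩
  rw [Real.dist_eq, sub_zero, abs_div, Nat.abs_cast, div_lt_iff₀ (by positivity)]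
  exact (hN n hn).trans_le (by gcongr)

end BorelCantelli

section MartingaleDifference

open Finset Topology

variable {Ω : Type*} [MeasurableSpace Ω]

/-- `A n` plays the role of the algebra of functions measurable at stage `n` of a filtration. -/
structure IsMartingaleDiffWithMomentBound (μ : Measure Ω) (A : ℕ → Subalgebra ℝ (Ω → ℝ))
    (D : ℕ → Ω → ℝ) (K : ℝ) : Prop where
  mono : Monotone A
  integrable : ∀ n, ∀ f ∈ A n, Integrable f μ
  mem : ∀ n, D n ∈ A (n + 1)
  integral_mul_eq_zero : ∀ n, ∀ g ∈ A n, ∫ ω, g ω * D n ω ∂μ = 0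
  integral_mul_sq_le :
    ∀ n, ∀ g ∈ A n, 0 ≤ g → ∫ ω, g ω * D n ω ^ 2 ∂μ ≤ K * ∫ ω, g ω ∂μ
  integral_mul_pow_four_le :
    ∀ n, ∀ g ∈ A n, 0 ≤ g → ∫ ω, g ω * D n ω ^ 4 ∂μ ≤ K * ∫ ω, g ω ∂μ

namespace IsMartingaleDiffWithMomentBound

variable {μ : Measure Ω} {A : ℕ → Subalgebra ℝ (Ω → ℝ)} {D : ℕ → Ω → ℝ} {K : ℝ}

theorem sum_range_mem (h : IsMartingaleDiffWithMomentBound μ A D K) (n : ℕ) :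
    ∑ i ∈ range n, D i ∈ A n :=
  Subalgebra.sum_mem _ fun i hi => h.mono (mem_range.mp hi) (h.mem i)

theorem integral_sq_le (h : IsMartingaleDiffWithMomentBound μ A D K) [IsProbabilityMeasure μ]
    (n : ℕ) : ∫ ω, D n ω ^ 2 ∂μ ≤ K := by
  simpa using h.integral_mul_sq_le n 1 (one_mem _) zero_le_one

theorem integral_pow_four_le (h : IsMartingaleDiffWithMomentBound μ A D K)
    [IsProbabilityMeasure μ] (n : ℕ) : ∫ ω, D n ω ^ 4 ∂μ ≤ K := by
  simpa using h.integral_mul_pow_four_le n 1 (one_mem _) zero_le_one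

theorem bound_nonneg (h : IsMartingaleDiffWithMomentBound μ A D K) [IsProbabilityMeasure μ] :
    0 ≤ K :=
  (integral_nonneg fun ω => sq_nonneg (D 0 ω)).trans (h.integral_sq_le 0)

theorem integral_sum_range_sq_le (h : IsMartingaleDiffWithMomentBound μ A D K)
    [IsProbabilityMeasure μ] (n : ℕ) :
    ∫ ω, (∑ i ∈ range n, D i) ω ^ 2 ∂μ ≤ K * n := by
  induction n with
  | zero => simp
  | succ n ih =>
    set S := ∑ i ∈ range n, D i
    have hS : S ∈ A (n + 1) := h.mono n.le_succ (h.sum_range_mem n)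
    have i2 : Integrable (fun ω => S ω ^ 2) μ := h.integrable _ _ (pow_mem hS 2)
    have i11 : Integrable (fun ω => 2 * (S ω * D n ω)) μ :=
      (h.integrable _ _ (mul_mem hS (h.mem n))).const_mul 2
    have i02 : Integrable (fun ω => D n ω ^ 2) μ := h.integrable _ _ (pow_mem (h.mem n) 2)
    have hexpand : ∀ ω, (∑ i ∈ range (n + 1), D i) ω ^ 2
        = S ω ^ 2 + 2 * (S ω * D n ω) + D n ω ^ 2 := fun ω => by
      rw [sum_range_succ, Pi.add_apply]; ring
    have i2_11 : Integrable (fun ω => S ω ^ 2 + 2 * (S ω * D n ω)) μ := i2.add i11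
    rw [integral_congr_ae (ae_of_all μ hexpand), integral_add i2_11 i02,
      integral_add i2 i11, integral_const_mul, h.integral_mul_eq_zero n S (h.sum_range_mem n)]
    push_cast
    linarith [h.integral_sq_le n]

theorem integral_sum_range_pow_four_le (h : IsMartingaleDiffWithMomentBound μ A D K)
    [IsProbabilityMeasure μ] (n : ℕ) :
    ∫ ω, (∑ i ∈ range n, D i) ω ^ 4 ∂μ ≤ (4 * K ^ 2 + 3 * K) * n ^ 2 := by
  induction n with
  | zero => simp
  | succ n ih =>
    set S := ∑ i ∈ range n, D i
    have hS : S ∈ A n := h.sum_range_mem n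
    have hS' : S ∈ A (n + 1) := h.mono n.le_succ hS
    have i4 : Integrable (fun ω => S ω ^ 4) μ := h.integrable _ _ (pow_mem hS' 4)
    have i31 : Integrable (fun ω => 4 * (S ω ^ 3 * D n ω)) μ :=
      (h.integrable _ _ (mul_mem (pow_mem hS' 3) (h.mem n))).const_mul 4
    have i22 : Integrable (fun ω => 8 * (S ω ^ 2 * D n ω ^ 2)) μ :=
      (h.integrable _ _ (mul_mem (pow_mem hS' 2) (pow_mem (h.mem n) 2))).const_mul 8
    have i04 : Integrable (fun ω => 3 * D n ω ^ 4) μ :=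
      (h.integrable _ _ (pow_mem (h.mem n) 4)).const_mul 3
    have isucc : Integrable (fun ω => (∑ i ∈ range (n + 1), D i) ω ^ 4) μ :=
      h.integrable _ _ (pow_mem (h.sum_range_mem (n + 1)) 4)
    -- `4 s d³ ≤ 2 s² d² + 2 d⁴` removes the odd term `S D³`
    have hbound : ∀ ω, (∑ i ∈ range (n + 1), D i) ω ^ 4
        ≤ S ω ^ 4 + 4 * (S ω ^ 3 * D n ω) + 8 * (S ω ^ 2 * D n ω ^ 2) + 3 * D n ω ^ 4 :=
      fun ω => by
        rw [sum_range_succ, Pi.add_apply]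
        nlinarith [mul_nonneg (sq_nonneg (D n ω)) (sq_nonneg (S ω - D n ω))]
    have i2 : Integrable (fun ω => S ω ^ 4 + 4 * (S ω ^ 3 * D n ω)) μ := i4.add i31
    have i3 : Integrable
        (fun ω => S ω ^ 4 + 4 * (S ω ^ 3 * D n ω) + 8 * (S ω ^ 2 * D n ω ^ 2)) μ := i2.add i22
    have i5 : Integrable (fun ω => S ω ^ 4 + 4 * (S ω ^ 3 * D n ω)
        + 8 * (S ω ^ 2 * D n ω ^ 2) + 3 * D n ω ^ 4) μ := i3.add i04
    have hmono := integral_mono isucc i5 hbound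
    rw [integral_add i3 i04, integral_add i2 i22,
      integral_add i4 i31, integral_const_mul, integral_const_mul, integral_const_mul] at hmono
    have hS3D : ∫ ω, S ω ^ 3 * D n ω ∂μ = 0 := h.integral_mul_eq_zero n _ (pow_mem hS 3)
    have hS2D2 : ∫ ω, S ω ^ 2 * D n ω ^ 2 ∂μ ≤ K * ∫ ω, S ω ^ 2 ∂μ :=
      h.integral_mul_sq_le n _ (pow_mem hS 2) (fun ω => sq_nonneg (S ω))
    have hD4 := h.integral_pow_four_le n
    have hK := h.bound_nonneg
    push_cast
    nlinarith [mul_le_mul_of_nonneg_left (h.integral_sum_range_sq_le n) hK]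

theorem ae_tendsto_sum_range_div (h : IsMartingaleDiffWithMomentBound μ A D K)
    [IsProbabilityMeasure μ] :
    ∀ᵐ ω ∂μ, Tendsto (fun n : ℕ => (∑ i ∈ range n, D i ω) / n) atTop (𝓝 0) := by
  simpa only [Finset.sum_apply] using ae_tendsto_div_atTop_of_integral_pow_four_le
    (fun n => h.integrable n _ (pow_mem (h.sum_range_mem n) 4))
    h.integral_sum_range_pow_four_le

end IsMartingaleDiffWithMomentBound

end MartingaleDifference

section Cubes

variable {d : ℕ}

theorem measurableSet_cubeSet (a : EuclideanSpace ℝ (Fin d)) (l : ℝ) :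
    MeasurableSet (cubeSet a l) := by
  have : cubeSet a l = ⋂ j, (fun y : EuclideanSpace ℝ (Fin d) => y j) ⁻¹' Ico (a j) (a j + l) := by
    ext y; simp [cubeSet]
  rw [this]
  exact .iInter fun j => (EuclideanSpace.proj j).continuous.measurable measurableSet_Ico

theorem volume_cubeSet (a : EuclideanSpace ℝ (Fin d)) {l : ℝ} (hl : 0 ≤ l) :
    volume (cubeSet a l) = ENNReal.ofReal (l ^ d) := by
  have : cubeSet a l = (MeasurableEquiv.toLp 2 (Fin d → ℝ)).symm ⁻¹'
      univ.pi fun j => Ico (a j) (a j + l) := by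
    ext y; simp [cubeSet]
  rw [this, (EuclideanSpace.volume_preserving_symm_measurableEquiv_toLp (Fin d)).measure_preimage
    (MeasurableSet.univ_pi fun j => measurableSet_Ico).nullMeasurableSet, volume_pi_pi]
  simp [Real.volume_Ico, ← ENNReal.ofReal_pow hl]

theorem cubeSet_zero_one : cubeSet (0 : EuclideanSpace ℝ (Fin d)) 1 = unitCube d := by
  ext y; simp [cubeSet, unitCube]

theorem measurableSet_unitCube : MeasurableSet (unitCube d) :=
  cubeSet_zero_one (d := d) ▸ measurableSet_cubeSet _ _

end Cubes

namespace CubeTree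

open Finset

variable {d : ℕ} {δ : ℝ} (T : CubeTree d δ) {n : ℕ} {x y : EuclideanSpace ℝ (Fin d)}

def cell (n : ℕ) (x : EuclideanSpace ℝ (Fin d)) : EuclideanSpace ℝ (Fin d) × ℝ :=
  (T.corner n x, T.side n x)

def cells (n : ℕ) : Set (EuclideanSpace ℝ (Fin d) × ℝ) := T.cell n '' unitCube d

@[simp]
theorem cubeSet_cell : cubeSet (T.cell n x).1 (T.cell n x).2 = T.node n x := rfl

theorem measurableSet_node (n : ℕ) (x : EuclideanSpace ℝ (Fin d)) :
    MeasurableSet (T.node n x) :=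
  measurableSet_cubeSet _ _

theorem node_zero (hx : x ∈ unitCube d) : T.node 0 x = unitCube d := by
  rw [node, T.corner_zero x hx, T.side_zero x hx, cubeSet_zero_one]

theorem node_subset_unitCube (hx : x ∈ unitCube d) (n : ℕ) : T.node n x ⊆ unitCube d := by
  induction n with
  | zero => rw [T.node_zero hx]
  | succ n ih => exact (T.nested n x hx).trans ih

theorem cell_eq_of_mem_node (hx : x ∈ unitCube d) (hy : y ∈ T.node n x) :
    T.cell n y = T.cell n x := by
  obtain ⟨h1, h2⟩ := T.compat n x hx y (T.node_subset_unitCube hx n hy) hy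
  rw [cell, cell, h1, h2]

theorem node_eq_of_mem_node (hx : x ∈ unitCube d) (hy : y ∈ T.node n x) :
    T.node n y = T.node n x := by
  rw [← cubeSet_cell, T.cell_eq_of_mem_node hx hy, cubeSet_cell]

theorem children_finite (hx : x ∈ unitCube d) (n : ℕ) : (T.children n x).Finite :=
  T.finiteChildren n x hx

theorem children_subset_cells (n : ℕ) (x : EuclideanSpace ℝ (Fin d)) :
    T.children n x ⊆ T.cells (n + 1) := by
  rintro c ⟨y, hy, -, rfl⟩
  exact ⟨y, hy, rfl⟩

theorem cells_finite (n : ℕ) : (T.cells n).Finite := by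
  induction n with
  | zero =>
    refine (finite_singleton (0, 1)).subset ?_
    rintro c ⟨x, hx, rfl⟩
    simp [cell, T.corner_zero x hx, T.side_zero x hx]
  | succ n ih =>
    -- a cell of level `n + 1` is a child of the level-`n` cell containing it
    refine (ih.biUnion (t := fun c => {c' | ∃ y ∈ unitCube d, y ∈ cubeSet c.1 c.2 ∧
      c' = T.cell (n + 1) y}) ?_).subset ?_
    · rintro _ ⟨x, hx, rfl⟩
      exact T.children_finite hx n
    · rintro _ ⟨y, hy, rfl⟩
      exact mem_biUnion ⟨y, hy, rfl⟩ ⟨y, hy, T.mem_node n y hy, rfl⟩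

theorem pairwiseDisjoint_of_subset_cells {P : Set (EuclideanSpace ℝ (Fin d) × ℝ)}
    (hP : P ⊆ T.cells n) : P.PairwiseDisjoint fun c => cubeSet c.1 c.2 := by
  intro c hc c' hc' hne
  obtain ⟨x, hx, rfl⟩ := hP hc
  obtain ⟨x', hx', rfl⟩ := hP hc'
  refine Set.disjoint_left.mpr fun z hz hz' => hne ?_
  rw [← T.cell_eq_of_mem_node hx hz, T.cell_eq_of_mem_node hx' hz']

theorem biUnion_cells (n : ℕ) : ⋃ c ∈ T.cells n, cubeSet c.1 c.2 = unitCube d := by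
  refine subset_antisymm (iUnion₂_subset ?_) fun x hx =>
    mem_biUnion ⟨x, hx, rfl⟩ (T.mem_node n x hx)
  rintro _ ⟨x, hx, rfl⟩
  exact T.node_subset_unitCube hx n

theorem biUnion_children (hx : x ∈ unitCube d) (n : ℕ) :
    ⋃ c ∈ T.children n x, cubeSet c.1 c.2 = T.node n x := by
  refine subset_antisymm (iUnion₂_subset ?_) fun z hz => ?_
  · rintro _ ⟨y, hy, hyx, rfl⟩
    change T.node (n + 1) y ⊆ _
    rw [← T.node_eq_of_mem_node hx hyx]
    exact T.nested n y hy
  · exact mem_biUnion ⟨z, T.node_subset_unitCube hx n hz, hz, rfl⟩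
      (T.mem_node (n + 1) z (T.node_subset_unitCube hx n hz))

theorem biUnion_children_toFinset (hx : x ∈ unitCube d) (n : ℕ) :
    ⋃ c ∈ (T.children_finite hx n).toFinset, cubeSet c.1 c.2 = T.node n x := by
  rw [← Finset.set_biUnion_coe, Set.Finite.coe_toFinset, T.biUnion_children hx n]

theorem pairwiseDisjoint_children_toFinset (hx : x ∈ unitCube d) (n : ℕ) :
    Set.PairwiseDisjoint ((T.children_finite hx n).toFinset : Set (EuclideanSpace ℝ (Fin d) × ℝ))
      fun c => cubeSet c.1 c.2 := by
  rw [Set.Finite.coe_toFinset]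
  exact T.pairwiseDisjoint_of_subset_cells (T.children_subset_cells n x)

theorem measure_node_eq_sum (μ : Measure (EuclideanSpace ℝ (Fin d))) (hx : x ∈ unitCube d)
    (n : ℕ) : μ (T.node n x) = ∑ c ∈ (T.children_finite hx n).toFinset, μ (cubeSet c.1 c.2) := by
  rw [← measure_biUnion_finset (T.pairwiseDisjoint_children_toFinset hx n)
    (fun c _ => measurableSet_cubeSet _ _), T.biUnion_children_toFinset hx n]

theorem measureReal_node_eq_sum (μ : Measure (EuclideanSpace ℝ (Fin d))) [IsFiniteMeasure μ]
    (hx : x ∈ unitCube d) (n : ℕ) :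
    μ.real (T.node n x) = ∑ c ∈ (T.children_finite hx n).toFinset, μ.real (cubeSet c.1 c.2) := by
  rw [measureReal_def, T.measure_node_eq_sum μ hx n, ENNReal.toReal_sum fun c _ => by finiteness]
  rfl

theorem mul_side_le_of_mem_children (hx : x ∈ unitCube d)
    {c : EuclideanSpace ℝ (Fin d) × ℝ} (hc : c ∈ T.children n x) :
    δ * T.side n x ≤ c.2 := by
  obtain ⟨y, hy, hyx, rfl⟩ := hc
  have hside : T.side n y = T.side n x := congr_arg Prod.snd (T.cell_eq_of_mem_node hx hyx)
  rw [← hside, ← le_div_iff₀ (T.side_pos n y hy)]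
  exact (T.regular n y hy).1

theorem card_children_le (hδ : 0 < δ) (hx : x ∈ unitCube d) (n : ℕ) :
    (#(T.children_finite hx n).toFinset : ℝ) ≤ δ⁻¹ ^ d := by
  set C := (T.children_finite hx n).toFinset
  set ℓ := T.side n x
  have hℓ : 0 < ℓ := T.side_pos n x hx
  have hside : ∀ c ∈ C, δ * ℓ ≤ c.2 := fun c hc =>
    T.mul_side_le_of_mem_children hx ((Set.Finite.mem_toFinset _).mp hc)
  have hpos : ∀ c ∈ C, 0 ≤ c.2 := fun c hc => (by positivity : 0 ≤ δ * ℓ).trans (hside c hc)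
  have hvolume : ℓ ^ d = ∑ c ∈ C, c.2 ^ d := by
    have h := T.measure_node_eq_sum volume hx n
    rw [node, volume_cubeSet _ hℓ.le, sum_congr rfl fun c hc => volume_cubeSet c.1 (hpos c hc),
      ← ENNReal.ofReal_sum_of_nonneg fun c hc => pow_nonneg (hpos c hc) d] at h
    exact (ENNReal.ofReal_eq_ofReal_iff (by positivity)
      (sum_nonneg fun c hc => pow_nonneg (hpos c hc) d)).mp h
  have hcard : #C * (δ * ℓ) ^ d ≤ ℓ ^ d := by
    rw [hvolume, ← nsmul_eq_mul]
    exact card_nsmul_le_sum _ _ _ fun c hc => pow_le_pow_left₀ (by positivity) (hside c hc) d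
  rw [inv_pow, ← one_div, le_div_iff₀ (by positivity)]
  refine le_of_mul_le_mul_right ?_ (pow_pos hℓ d)
  calc #C * δ ^ d * ℓ ^ d = #C * (δ * ℓ) ^ d := by ring
    _ ≤ 1 * ℓ ^ d := hcard.trans_eq (one_mul _).symm

def levelAlgebra (n : ℕ) : Subalgebra ℝ (EuclideanSpace ℝ (Fin d) → ℝ) where
  carrier := {f | ∀ x ∈ unitCube d, ∀ y ∈ T.node n x, f y = f x}
  mul_mem' hf hg x hx y hy := by simp only [Pi.mul_apply, hf x hx y hy, hg x hx y hy]
  add_mem' hf hg x hx y hy := by simp only [Pi.add_apply, hf x hx y hy, hg x hx y hy]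
  algebraMap_mem' _ _ _ _ _ := rfl

theorem levelAlgebra_mono : Monotone T.levelAlgebra :=
  monotone_nat_of_le_succ fun n _ hf x hx y hy => hf x hx y (T.nested n x hx hy)

section Integration

variable {μ : Measure (EuclideanSpace ℝ (Fin d))} {f g h : EuclideanSpace ℝ (Fin d) → ℝ}

theorem integrable_of_mem_levelAlgebra [IsFiniteMeasure μ] (hμ : ∀ᵐ x ∂μ, x ∈ unitCube d)
    (hf : f ∈ T.levelAlgebra n) : Integrable f μ := by
  have : IntegrableOn f (unitCube d) μ := by
    rw [← T.biUnion_cells n, integrableOn_finite_biUnion (T.cells_finite n)]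
    rintro _ ⟨x, hx, rfl⟩
    exact (integrableOn_const (C := f x)).congr_fun (fun y hy => (hf x hx y hy).symm)
      (measurableSet_cubeSet _ _)
  rwa [IntegrableOn, Measure.restrict_eq_self_of_ae_mem hμ] at this

theorem integral_eq_sum_cells (hμ : ∀ᵐ x ∂μ, x ∈ unitCube d) (hf : Integrable f μ) (n : ℕ) :
    ∫ x, f x ∂μ = ∑ c ∈ (T.cells_finite n).toFinset, ∫ x in cubeSet c.1 c.2, f x ∂μ := by
  have hdisj : Set.PairwiseDisjoint
      ((T.cells_finite n).toFinset : Set (EuclideanSpace ℝ (Fin d) × ℝ))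
      fun c => cubeSet c.1 c.2 := by
    rw [Set.Finite.coe_toFinset]
    exact T.pairwiseDisjoint_of_subset_cells subset_rfl
  rw [← integral_biUnion_finset _ (fun c _ => measurableSet_cubeSet _ _) hdisj
    fun c _ => hf.integrableOn, ← Finset.set_biUnion_coe, Set.Finite.coe_toFinset,
    T.biUnion_cells n, Measure.restrict_eq_self_of_ae_mem hμ]

theorem setIntegral_node_mul (hg : g ∈ T.levelAlgebra n) (hx : x ∈ unitCube d) :
    ∫ y in T.node n x, g y * h y ∂μ = g x * ∫ y in T.node n x, h y ∂μ := by
  rw [← integral_const_mul]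
  exact setIntegral_congr_fun (T.measurableSet_node n x) fun y hy => by rw [hg x hx y hy]

theorem integral_mul_eq_zero_of_setIntegral_node [IsFiniteMeasure μ]
    (hμ : ∀ᵐ x ∂μ, x ∈ unitCube d) (hg : g ∈ T.levelAlgebra n)
    (hgh : Integrable (fun y => g y * h y) μ)
    (hh : ∀ x ∈ unitCube d, ∫ y in T.node n x, h y ∂μ = 0) :
    ∫ y, g y * h y ∂μ = 0 := by
  rw [T.integral_eq_sum_cells hμ hgh n]
  refine sum_eq_zero fun c hc => ?_
  obtain ⟨x, hx, rfl⟩ := (Set.Finite.mem_toFinset _).mp hc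
  rw [cubeSet_cell, T.setIntegral_node_mul hg hx, hh x hx, mul_zero]

theorem integral_mul_le_of_setIntegral_node [IsFiniteMeasure μ]
    (hμ : ∀ᵐ x ∂μ, x ∈ unitCube d) (hg : g ∈ T.levelAlgebra n) (hg0 : 0 ≤ g)
    (hgh : Integrable (fun y => g y * h y) μ) {K : ℝ}
    (hh : ∀ x ∈ unitCube d, ∫ y in T.node n x, h y ∂μ ≤ K * μ.real (T.node n x)) :
    ∫ y, g y * h y ∂μ ≤ K * ∫ y, g y ∂μ := by
  rw [T.integral_eq_sum_cells hμ hgh n,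
    T.integral_eq_sum_cells hμ (T.integrable_of_mem_levelAlgebra hμ hg) n, mul_sum]
  refine sum_le_sum fun c hc => ?_
  obtain ⟨x, hx, rfl⟩ := (Set.Finite.mem_toFinset _).mp hc
  rw [cubeSet_cell, T.setIntegral_node_mul hg hx,
    setIntegral_congr_fun (T.measurableSet_node n x) fun y hy => hg x hx y hy,
    setIntegral_const, smul_eq_mul]
  calc g x * ∫ y in T.node n x, h y ∂μ ≤ g x * (K * μ.real (T.node n x)) :=
        mul_le_mul_of_nonneg_left (hh x hx) (hg0 x)
    _ = K * (μ.real (T.node n x) * g x) := by ring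

end Integration

section Entropy

open Real

variable (μ : Measure (EuclideanSpace ℝ (Fin d)))

noncomputable def momentBound (d : ℕ) (δ : ℝ) (k : ℕ) : ℝ := δ⁻¹ ^ d * k ^ k + (δ⁻¹ ^ d) ^ k

theorem momentBound_nonneg (hδ : 0 < δ) (k : ℕ) : 0 ≤ momentBound d δ k := by
  unfold momentBound; positivity

noncomputable def infoIncrement (n : ℕ) (x : EuclideanSpace ℝ (Fin d)) : ℝ :=
  log (μ.real (T.node n x)) - log (μ.real (T.node (n + 1) x)) - treeEntropy μ T n x

theorem treeEntropy_eq_of_mem_node (hx : x ∈ unitCube d) (hy : y ∈ T.node n x) :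
    treeEntropy μ T n y = treeEntropy μ T n x := by
  unfold treeEntropy children
  rw [T.node_eq_of_mem_node hx hy]

theorem treeEntropy_eq_sum (hx : x ∈ unitCube d) (n : ℕ) :
    treeEntropy μ T n x = ∑ c ∈ (T.children_finite hx n).toFinset,
      negMulLog (μ.real (cubeSet c.1 c.2) / μ.real (T.node n x)) :=
  finsum_mem_eq_finite_toFinset_sum _ (T.children_finite hx n)

theorem infoIncrement_mem_levelAlgebra (n : ℕ) :
    T.infoIncrement μ n ∈ T.levelAlgebra (n + 1) := by
  intro x hx y hy
  have hy' : y ∈ T.node n x := T.nested n x hx hy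
  simp only [infoIncrement, T.node_eq_of_mem_node hx hy, T.node_eq_of_mem_node hx hy',
    T.treeEntropy_eq_of_mem_node μ hx hy']

theorem infoIncrement_eq_of_mem_children (hx : x ∈ unitCube d)
    {c : EuclideanSpace ℝ (Fin d) × ℝ} (hc : c ∈ T.children n x) {z : EuclideanSpace ℝ (Fin d)}
    (hz : z ∈ cubeSet c.1 c.2) :
    T.infoIncrement μ n z = log (μ.real (T.node n x)) - log (μ.real (cubeSet c.1 c.2))
      - treeEntropy μ T n x := by
  obtain ⟨y, hy, hyx, rfl⟩ := hc
  have hzx : z ∈ T.node n x := T.node_eq_of_mem_node hx hyx ▸ T.nested n y hy hz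
  rw [infoIncrement, T.node_eq_of_mem_node hx hzx, T.treeEntropy_eq_of_mem_node μ hx hzx,
    T.node_eq_of_mem_node hy hz]
  rfl

theorem setIntegral_node_comp_infoIncrement [IsFiniteMeasure μ] (hx : x ∈ unitCube d)
    (φ : ℝ → ℝ) :
    ∫ z in T.node n x, φ (T.infoIncrement μ n z) ∂μ
      = ∑ c ∈ (T.children_finite hx n).toFinset, φ (log (μ.real (T.node n x))
          - log (μ.real (cubeSet c.1 c.2)) - treeEntropy μ T n x) * μ.real (cubeSet c.1 c.2) := by
  have hconst : ∀ c ∈ (T.children_finite hx n).toFinset, ∀ z ∈ cubeSet c.1 c.2,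
      φ (T.infoIncrement μ n z) = φ (log (μ.real (T.node n x))
          - log (μ.real (cubeSet c.1 c.2)) - treeEntropy μ T n x) := fun c hc z hz => by
    rw [T.infoIncrement_eq_of_mem_children μ hx ((Set.Finite.mem_toFinset _).mp hc) hz]
  conv_lhs => rw [← T.biUnion_children_toFinset hx n]
  rw [integral_biUnion_finset _ (fun c _ => measurableSet_cubeSet _ _)
    (T.pairwiseDisjoint_children_toFinset hx n)
    fun c hc => IntegrableOn.congr_fun integrableOn_const
      (fun z hz => (hconst c hc z hz).symm) (measurableSet_cubeSet _ _)]
  refine sum_congr rfl fun c hc => ?_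
  rw [setIntegral_congr_fun (measurableSet_cubeSet _ _) (hconst c hc), setIntegral_const,
    smul_eq_mul, mul_comm]

theorem setIntegral_node_infoIncrement [IsFiniteMeasure μ] (hx : x ∈ unitCube d) :
    ∫ z in T.node n x, T.infoIncrement μ n z ∂μ = 0 :=
  (T.setIntegral_node_comp_infoIncrement μ hx id).trans
    (sum_information_sub_entropy_mul_eq_zero (fun _ _ => measureReal_nonneg)
      (T.measureReal_node_eq_sum μ hx n).symm (T.treeEntropy_eq_sum μ hx n).symm)

theorem setIntegral_node_infoIncrement_pow_le [IsFiniteMeasure μ] (hδ : 0 < δ)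
    (hx : x ∈ unitCube d) (k : ℕ) :
    ∫ z in T.node n x, T.infoIncrement μ n z ^ k ∂μ ≤ momentBound d δ k * μ.real (T.node n x) := by
  set C := (T.children_finite hx n).toFinset
  have hcard := T.card_children_le hδ hx n
  rw [T.setIntegral_node_comp_infoIncrement μ hx (· ^ k)]
  calc ∑ c ∈ C, (log (μ.real (T.node n x)) - log (μ.real (cubeSet c.1 c.2))
          - treeEntropy μ T n x) ^ k * μ.real (cubeSet c.1 c.2)
      ≤ ∑ c ∈ C, |log (μ.real (T.node n x)) - log (μ.real (cubeSet c.1 c.2))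
          - treeEntropy μ T n x| ^ k * μ.real (cubeSet c.1 c.2) :=
        sum_le_sum fun c _ => mul_le_mul_of_nonneg_right
          ((le_abs_self _).trans_eq (abs_pow _ k)) measureReal_nonneg
    _ ≤ (#C * k ^ k + #C ^ k) * μ.real (T.node n x) :=
        sum_abs_information_sub_entropy_pow_mul_le (fun _ _ => measureReal_nonneg)
          (T.measureReal_node_eq_sum μ hx n).symm (T.treeEntropy_eq_sum μ hx n).symm k
    _ ≤ momentBound d δ k * μ.real (T.node n x) := by
        unfold momentBound
        gcongr

theorem isMartingaleDiffWithMomentBound_infoIncrement [IsProbabilityMeasure μ] (hδ : 0 < δ)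
    (hμ : ∀ᵐ x ∂μ, x ∈ unitCube d) :
    IsMartingaleDiffWithMomentBound μ T.levelAlgebra (T.infoIncrement μ)
      (momentBound d δ 2 + momentBound d δ 4) where
  mono := T.levelAlgebra_mono
  integrable _ _ hf := T.integrable_of_mem_levelAlgebra hμ hf
  mem := T.infoIncrement_mem_levelAlgebra μ
  integral_mul_eq_zero n _ hg :=
    T.integral_mul_eq_zero_of_setIntegral_node hμ hg
      (T.integrable_of_mem_levelAlgebra hμ
        (mul_mem (T.levelAlgebra_mono n.le_succ hg) (T.infoIncrement_mem_levelAlgebra μ n)))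
      fun _ hx => T.setIntegral_node_infoIncrement μ hx
  integral_mul_sq_le n _ hg hg0 :=
    T.integral_mul_le_of_setIntegral_node hμ hg hg0
      (T.integrable_of_mem_levelAlgebra hμ (mul_mem (T.levelAlgebra_mono n.le_succ hg)
        (pow_mem (T.infoIncrement_mem_levelAlgebra μ n) 2)))
      fun _ hx => (T.setIntegral_node_infoIncrement_pow_le μ hδ hx 2).trans <|
        mul_le_mul_of_nonneg_right (le_add_of_nonneg_right (momentBound_nonneg hδ 4))
          measureReal_nonneg
  integral_mul_pow_four_le n _ hg hg0 :=
    T.integral_mul_le_of_setIntegral_node hμ hg hg0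
      (T.integrable_of_mem_levelAlgebra hμ (mul_mem (T.levelAlgebra_mono n.le_succ hg)
        (pow_mem (T.infoIncrement_mem_levelAlgebra μ n) 4)))
      fun _ hx => (T.setIntegral_node_infoIncrement_pow_le μ hδ hx 4).trans <|
        mul_le_mul_of_nonneg_right (le_add_of_nonneg_left (momentBound_nonneg hδ 2))
          measureReal_nonneg

theorem sum_range_infoIncrement (hμU : μ (unitCube d) = 1) (hx : x ∈ unitCube d) (n : ℕ) :
    ∑ i ∈ range n, T.infoIncrement μ i x
      = log (1 / μ.real (T.node n x)) - ∑ i ∈ range n, treeEntropy μ T i x := by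
  have h0 : log (μ.real (T.node 0 x)) = 0 := by
    rw [T.node_zero hx, measureReal_def, hμU, ENNReal.toReal_one, log_one]
  simp only [infoIncrement]
  rw [sum_sub_distrib, sum_range_sub' (fun i => log (μ.real (T.node i x))), h0, one_div,
    log_inv, zero_sub]

end Entropy

end CubeTree

theorem tree_entropy_lln_general (d : ℕ) (δ : ℝ) (hδ : 0 < δ)
    (T : CubeTree d δ) (μ : Measure (EuclideanSpace ℝ (Fin d))) [IsProbabilityMeasure μ]
    (hsupp : μ (unitCube d) = 1) :
    ∀ᵐ x ∂μ, Filter.Tendsto (fun n : ℕ =>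
      (1 / (n : ℝ)) * (Real.log (1 / (μ (T.node n x)).toReal)
        - ∑ i ∈ Finset.range n, treeEntropy μ T i x))
      Filter.atTop (nhds 0) := by
  have hμ : ∀ᵐ x ∂μ, x ∈ unitCube d :=
    (ae_mem_iff_measure_eq measurableSet_unitCube.nullMeasurableSet).mpr
      (by rw [hsupp, measure_univ])
  have hD := T.isMartingaleDiffWithMomentBound_infoIncrement μ hδ hμ
  filter_upwards [hμ, hD.ae_tendsto_sum_range_div] with x hx hlim
  refine hlim.congr fun n => ?_
  rw [T.sum_range_infoIncrement μ hsupp hx n, one_div_mul_eq_div]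
  rfl

/-- For a `δ`-regular tree of cubes `R*` with root `[0,1)^d` and a Borel
probability measure `μ` on `[0,1)^d`, for `μ`-a.e. `x`,
`(1/n)·(log(1/μ(R_n(x))) − Σ_{i<n} H(R_i(x))) → 0`. -/
theorem tree_entropy_lln (d : ℕ) (hd : 1 ≤ d) (δ : ℝ) (hδ : 0 < δ)
    (T : CubeTree d δ) (μ : Measure (EuclideanSpace ℝ (Fin d))) [IsProbabilityMeasure μ]
    (hsupp : μ (unitCube d) = 1) :
    ∀ᵐ x ∂μ, Filter.Tendsto (fun n : ℕ =>
      (1 / (n : ℝ)) * (Real.log (1 / (μ (T.node n x)).toReal)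
        - ∑ i ∈ Finset.range n, treeEntropy μ T i x))
      Filter.atTop (nhds 0) :=
  tree_entropy_lln_general d δ hδ T μ hsupp
end
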